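/- Let D be a simple pMC over a finite parameter set X with target set T, and let val, val' : X → [0,1] be well-defined valuations such that for every x ∈ X: (val x = 0 ↔ val' x = 0) and (val x = 1 ↔ val' x = 1). Then for every state s: Pr_{D[val],s}(◇T) = 0 if and only if Pr_{D[val'],s}(◇T) = 0, and Pr_{D[val],s}(◇T) = 1 if and only if Pr_{D[val'],s}(◇T) = 1. -/

import Mathlib

/-- A finite path in state space `S`: a length `m` together with `m + 1` states. -/
abbrev MCPath (S : Type) : Type := Σ m : ℕ, Fin (m + 1) → S

/-- The mass of a path: the product of the transition probabilities along it. -/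
def pathMass {S : Type} (P : S → S → ℝ) (π : MCPath S) : ℝ :=
  ∏ i : Fin π.1, P (π.2 i.castSucc) (π.2 i.succ)

/-- A hitting path from `s` to `T`: it starts in `s`, ends in `T`, and no proper prefix
visits `T`. -/
def IsHitting {S : Type} (T : Set S) (s : S) (π : MCPath S) : Prop :=
  π.2 0 = s ∧ π.2 (Fin.last π.1) ∈ T ∧ ∀ i : Fin π.1, π.2 i.castSucc ∉ T

/-- The reachability probability `Pr_{P,s}(◇T)`: the sum of the masses of all hitting
paths from `s` to `T`. -/
noncomputable def reachProb {S : Type} (P : S → S → ℝ) (T : Set S) (s : S) : ℝ :=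
  ∑' π : {π : MCPath S // IsHitting T s π}, pathMass P π.1

/-- An entry of a simple pMC: a nonnegative rational constant, a variable `x`, or `1 - x`. -/
def SimpleEntry {X : Type} (p : MvPolynomial X ℚ) : Prop :=
  (∃ q : ℚ, 0 ≤ q ∧ p = MvPolynomial.C q) ∨
  (∃ x : X, p = MvPolynomial.X x) ∨
  (∃ x : X, p = 1 - MvPolynomial.X x)

/-- A simple parametric Markov chain over parameter set `X` with `n` states:
all transition polynomials are simple entries and every row sums to `1` as a polynomial. -/
structure SimplePMC (X : Type) (n : ℕ) where
  init : Fin n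
  P : Fin n → Fin n → MvPolynomial X ℚ
  simple : ∀ s s', SimpleEntry (P s s')
  rowSum : ∀ s, ∑ s', P s s' = 1

/-- A valuation is well-defined if every parameter value lies in `[0,1]`. -/
def WDVal {X : Type} (val : X → ℝ) : Prop := ∀ x, val x ∈ Set.Icc (0 : ℝ) 1

/-- A valuation is graph-preserving if every parameter value lies in `(0,1)`. -/
def GPVal {X : Type} (val : X → ℝ) : Prop := ∀ x, val x ∈ Set.Ioo (0 : ℝ) 1

/-- The transition matrix of the instantiation `D[val]`. -/
noncomputable def instP {X : Type} {n : ℕ} (D : SimplePMC X n) (val : X → ℝ) :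
    Fin n → Fin n → ℝ :=
  fun s s' => MvPolynomial.aeval val (D.P s s')

/-!
Qualitative reachability depends only on the graph of the chain. Write `a ⟶ b` when `a ∉ T`
and `P a b ≠ 0`. A hitting path of positive mass is a `⟶`-walk into `T`, and conversely along
such a walk `Pr_a ≥ P a b · Pr_b > 0`; so `Pr_s(◇T) > 0` iff `T` is `⟶*`-reachable from `s`.
Off `T`, `Pr_a` is the `P a ·`-average of the values at its successors, so an extreme value of
`Pr` over a `⟶`-closed set of states propagates along `⟶`. Applied to the maximum `1`, this
shows that `Pr_s(◇T) = 1` forces `Pr_u(◇T) = 1 > 0` at every `u` reachable from `s`. Applied to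
the minimum over the states reachable from `s`, each of which reaches `T`, it shows that this
minimum is the value `1` at a target. Both qualitative properties are thus determined by `⟶`,
and an entry of a simple pMC vanishes under `val` iff it vanishes under `val'`.
-/

section Paths

variable {S : Type}

def constPath (s : S) : MCPath S := ⟨0, fun _ => s⟩

def consPath (s : S) (π : MCPath S) : MCPath S := ⟨π.1 + 1, Fin.cons s π.2⟩

/-- A path of length `0` is left unchanged. -/
def tailPath : MCPath S → MCPath S
  | ⟨0, f⟩ => ⟨0, f⟩
  | ⟨k + 1, f⟩ => ⟨k, Fin.tail f⟩

lemma tailPath_consPath (s : S) (π : MCPath S) : tailPath (consPath s π) = π := rfl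

lemma consPath_tailPath {π : MCPath S} {s : S} (h : π.1 ≠ 0) (h0 : π.2 0 = s) :
    consPath s (tailPath π) = π := by
  obtain ⟨_ | k, f⟩ := π
  · exact absurd rfl h
  · subst h0
    exact congrArg (Sigma.mk _) (Fin.cons_self_tail f)

lemma pathMass_constPath (P : S → S → ℝ) (s : S) : pathMass P (constPath s) = 1 :=
  Finset.prod_empty

lemma pathMass_consPath (P : S → S → ℝ) (s : S) (π : MCPath S) :
    pathMass P (consPath s π) = P s (π.2 0) * pathMass P π := by
  refine (Fin.prod_univ_succ (n := π.1) _).trans ?_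
  simp only [consPath, Fin.castSucc_zero, Fin.cons_zero, ← Fin.succ_castSucc, Fin.cons_succ]
  rfl

variable {T : Set S} {s : S} {π : MCPath S}

lemma isHitting_constPath (hs : s ∈ T) : IsHitting T s (constPath s) :=
  ⟨rfl, hs, fun i => i.elim0⟩

lemma IsHitting.eq_constPath (hπ : IsHitting T s π) (hs : s ∈ T) : π = constPath s := by
  obtain ⟨_ | k, f⟩ := π
  · exact congrArg (Sigma.mk 0) (funext fun i => Fin.fin_one_eq_zero i ▸ hπ.1)
  · exact absurd (hπ.1 ▸ hs) (hπ.2.2 0)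

lemma IsHitting.length_ne_zero (hπ : IsHitting T s π) (hs : s ∉ T) : π.1 ≠ 0 := by
  obtain ⟨_ | k, f⟩ := π
  · exact absurd (hπ.1 ▸ hπ.2.1) hs
  · exact Nat.succ_ne_zero k

lemma isHitting_consPath {s' : S} (hs : s ∉ T) (hπ : IsHitting T s' π) :
    IsHitting T s (consPath s π) := by
  refine ⟨rfl, by simpa [consPath, ← Fin.succ_last] using hπ.2.1, fun i => ?_⟩
  cases i using Fin.cases with
  | zero => exact hs
  | succ j => simpa [consPath, ← Fin.succ_castSucc] using hπ.2.2 j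

lemma isHitting_tailPath (hπ : IsHitting T s π) (hs : s ∉ T) :
    IsHitting T ((tailPath π).2 0) (tailPath π) := by
  obtain ⟨_ | k, f⟩ := π
  · exact absurd rfl (hπ.length_ne_zero hs)
  · refine ⟨rfl, ?_, fun j => ?_⟩
    · simpa [tailPath, Fin.tail, Fin.succ_last] using hπ.2.1
    · change f j.castSucc.succ ∉ T
      exact Fin.succ_castSucc j ▸ hπ.2.2 j.succ

/-- Off the target, a hitting path is a first step followed by a hitting path from its
second state. -/
def hittingEquiv (T : Set S) (s : S) (hs : s ∉ T) :
    (Σ s' : S, {π : MCPath S // IsHitting T s' π}) ≃ {π : MCPath S // IsHitting T s π} where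
  toFun x := ⟨consPath s x.2.1, isHitting_consPath hs x.2.2⟩
  invFun π := ⟨(tailPath π.1).2 0, tailPath π.1, isHitting_tailPath π.2 hs⟩
  left_inv := by
    rintro ⟨s', π, hπ⟩
    obtain rfl : π.2 0 = s' := hπ.1
    rfl
  right_inv := by
    rintro ⟨π, hπ⟩
    exact Subtype.ext (consPath_tailPath (hπ.length_ne_zero hs) hπ.1)

lemma pathMass_hittingEquiv (P : S → S → ℝ) (hs : s ∉ T)
    (x : Σ s' : S, {π : MCPath S // IsHitting T s' π}) :
    pathMass P (hittingEquiv T s hs x).1 = P s x.1 * pathMass P x.2.1 := by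
  rw [hittingEquiv, Equiv.coe_fn_mk, pathMass_consPath, x.2.2.1]

end Paths

section Reach

variable {S : Type} {P : S → S → ℝ} {T : Set S}

lemma pathMass_nonneg (hP : ∀ a b, 0 ≤ P a b) (π : MCPath S) : 0 ≤ pathMass P π :=
  Finset.prod_nonneg fun _ _ => hP _ _

lemma reachProb_nonneg (hP : ∀ a b, 0 ≤ P a b) (s : S) : 0 ≤ reachProb P T s :=
  tsum_nonneg fun π => pathMass_nonneg hP π.1

lemma reachProb_of_mem {s : S} (hs : s ∈ T) : reachProb P T s = 1 := by
  rw [reachProb, tsum_eq_single ⟨constPath s, isHitting_constPath hs⟩ fun π hπ =>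
    absurd (Subtype.ext (π.2.eq_constPath hs)) hπ, pathMass_constPath]

lemma sum_pathMass_le_one_of_mem (hP : ∀ a b, 0 ≤ P a b) {s : S} (hs : s ∈ T)
    (F : Finset {π : MCPath S // IsHitting T s π}) : ∑ π ∈ F, pathMass P π.1 ≤ 1 := by
  let π₀ : {π : MCPath S // IsHitting T s π} := ⟨constPath s, isHitting_constPath hs⟩
  have hF : F ⊆ {π₀} := fun π _ => Finset.mem_singleton.2 (Subtype.ext (π.2.eq_constPath hs))
  calc ∑ π ∈ F, pathMass P π.1
      ≤ ∑ π ∈ {π₀}, pathMass P π.1 :=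
        Finset.sum_le_sum_of_subset_of_nonneg hF fun π _ _ => pathMass_nonneg hP π.1
    _ = 1 := by rw [Finset.sum_singleton, pathMass_constPath]

variable [Fintype S]

lemma sum_pathMass_le_one_of_length_le (hP : ∀ a b, 0 ≤ P a b) (hrow : ∀ a, ∑ b, P a b = 1)
    (m : ℕ) (s : S) (F : Finset {π : MCPath S // IsHitting T s π}) (hF : ∀ π ∈ F, π.1.1 ≤ m) :
    ∑ π ∈ F, pathMass P π.1 ≤ 1 := by
  induction m generalizing s F with
  | zero =>
    by_cases hs : s ∈ T
    · exact sum_pathMass_le_one_of_mem hP hs F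
    rw [Finset.sum_eq_zero fun π hπ => absurd (Nat.le_zero.1 (hF π hπ)) (π.2.length_ne_zero hs)]
    exact zero_le_one
  | succ m ih =>
    by_cases hs : s ∈ T
    · exact sum_pathMass_le_one_of_mem hP hs F
    classical
    set G := F.map (hittingEquiv T s hs).symm.toEmbedding
    have hFG : ∑ π ∈ F, pathMass P π.1 = ∑ x ∈ G, P s x.1 * pathMass P x.2.1 :=
      Finset.sum_equiv (hittingEquiv T s hs).symm (by simp [G]) fun π _ => by
        rw [← pathMass_hittingEquiv P hs, Equiv.apply_symm_apply]
    calc ∑ π ∈ F, pathMass P π.1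
        = ∑ s', P s s' * ∑ π ∈ G.preimage (Sigma.mk s') sigma_mk_injective.injOn,
            pathMass P π.1 := by
          rw [hFG]
          conv_lhs => rw [← G.sigma_preimage_mk_of_subset (Finset.subset_univ _)]
          rw [Finset.sum_sigma]
          simp_rw [Finset.mul_sum]
      _ ≤ ∑ s', P s s' * 1 := by
          gcongr with s'
          · exact hP _ _
          exact ih s' _ fun π hπ =>
            Nat.le_of_succ_le_succ (hF _ (Finset.mem_map_equiv.1 (Finset.mem_preimage.1 hπ)))
      _ = 1 := by simp [hrow]

lemma sum_pathMass_le_one (hP : ∀ a b, 0 ≤ P a b) (hrow : ∀ a, ∑ b, P a b = 1) (s : S)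
    (F : Finset {π : MCPath S // IsHitting T s π}) : ∑ π ∈ F, pathMass P π.1 ≤ 1 :=
  sum_pathMass_le_one_of_length_le hP hrow (F.sup fun π => π.1.1) s F
    fun _ hπ => Finset.le_sup (f := fun π => π.1.1) hπ

lemma summable_pathMass_hitting (hP : ∀ a b, 0 ≤ P a b) (hrow : ∀ a, ∑ b, P a b = 1) (s : S) :
    Summable fun π : {π : MCPath S // IsHitting T s π} => pathMass P π.1 :=
  summable_of_sum_le (fun π => pathMass_nonneg hP π.1) (sum_pathMass_le_one hP hrow s)

lemma reachProb_le_one (hP : ∀ a b, 0 ≤ P a b) (hrow : ∀ a, ∑ b, P a b = 1) (s : S) :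
    reachProb P T s ≤ 1 :=
  tsum_le_of_sum_le' zero_le_one (sum_pathMass_le_one hP hrow s)

lemma reachProb_of_not_mem (hP : ∀ a b, 0 ≤ P a b) (hrow : ∀ a, ∑ b, P a b = 1) {s : S}
    (hs : s ∉ T) : reachProb P T s = ∑ s', P s s' * reachProb P T s' := by
  have hsum := ((hittingEquiv T s hs).summable_iff.2 (summable_pathMass_hitting hP hrow s)).congr
    (pathMass_hittingEquiv P hs)
  rw [reachProb, ← (hittingEquiv T s hs).tsum_eq, tsum_congr (pathMass_hittingEquiv P hs),
    hsum.tsum_sigma, tsum_fintype]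
  simp_rw [reachProb, tsum_mul_left]

end Reach

lemma eq_of_forall_le_of_sum_mul_eq {ι 𝕜 : Type*} [Fintype ι] [Ring 𝕜] [LinearOrder 𝕜]
    [IsStrictOrderedRing 𝕜] {w f : ι → 𝕜} {c : 𝕜}
    (hw : ∀ i, 0 ≤ w i) (hw1 : ∑ i, w i = 1) (hf : ∀ i, w i ≠ 0 → f i ≤ c)
    (hc : ∑ i, w i * f i = c) {j : ι} (hj : w j ≠ 0) : f j = c := by
  have hterm : ∀ i, 0 ≤ w i * (c - f i) := fun i => by
    by_cases hi : w i = 0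
    · simp [hi]
    · exact mul_nonneg (hw i) (sub_nonneg.2 (hf i hi))
  have hsum : ∑ i, w i * (c - f i) = 0 := by
    simp only [mul_sub, Finset.sum_sub_distrib, ← Finset.sum_mul, hw1, one_mul, hc, sub_self]
  have := (Finset.sum_eq_zero_iff_of_nonneg fun i _ => hterm i).1 hsum j (Finset.mem_univ j)
  exact (sub_eq_zero.1 ((mul_eq_zero.1 this).resolve_left hj)).symm

lemma eq_of_forall_ge_of_sum_mul_eq {ι 𝕜 : Type*} [Fintype ι] [Ring 𝕜] [LinearOrder 𝕜]
    [IsStrictOrderedRing 𝕜] {w f : ι → 𝕜} {c : 𝕜}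
    (hw : ∀ i, 0 ≤ w i) (hw1 : ∑ i, w i = 1) (hf : ∀ i, w i ≠ 0 → c ≤ f i)
    (hc : ∑ i, w i * f i = c) {j : ι} (hj : w j ≠ 0) : f j = c :=
  neg_inj.1 <| eq_of_forall_le_of_sum_mul_eq (f := fun i => -f i) (c := -c) hw hw1
    (fun i hi => neg_le_neg (hf i hi)) (by simp [hc]) hj

section Graph

variable {S : Type} {P : S → S → ℝ} {T : Set S}

open Relation

/-- The edges of the underlying graph that a hitting path can take: the target is never left. -/
def transEdge (P : S → S → ℝ) (T : Set S) (a b : S) : Prop := a ∉ T ∧ P a b ≠ 0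

lemma transEdge_congr {Q : S → S → ℝ} (h : ∀ a b, P a b = 0 ↔ Q a b = 0) :
    transEdge P T = transEdge Q T := by
  ext a b
  exact and_congr_right' (not_congr (h a b))

lemma IsHitting.exists_reflTransGen {s : S} {π : MCPath S} (hπ : IsHitting T s π)
    (hm : pathMass P π ≠ 0) : ∃ t ∈ T, ReflTransGen (transEdge P T) s t := by
  obtain ⟨k, f⟩ := π
  induction k generalizing s with
  | zero => exact ⟨s, hπ.1 ▸ hπ.2.1, .refl⟩
  | succ k ih =>
    have hs : s ∉ T := hπ.1 ▸ hπ.2.2 0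
    have hsplit := pathMass_consPath P s (tailPath (⟨k + 1, f⟩ : MCPath S))
    rw [consPath_tailPath (Nat.succ_ne_zero k) hπ.1] at hsplit
    rw [hsplit] at hm
    obtain ⟨t, ht, hst⟩ := ih _ (isHitting_tailPath hπ hs) (right_ne_zero_of_mul hm)
    exact ⟨t, ht, .head ⟨hs, left_ne_zero_of_mul hm⟩ hst⟩

variable [Fintype S]

lemma reachProb_pos_of_reflTransGen (hP : ∀ a b, 0 ≤ P a b)
    (hrow : ∀ a, ∑ b, P a b = 1) {s t : S} (hst : ReflTransGen (transEdge P T) s t)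
    (ht : t ∈ T) : 0 < reachProb P T s := by
  induction hst using ReflTransGen.head_induction_on with
  | refl => rw [reachProb_of_mem ht]; exact one_pos
  | head hab _ ih =>
    rw [reachProb_of_not_mem hP hrow hab.1]
    calc 0 < P _ _ * reachProb P T _ := mul_pos ((hP _ _).lt_of_ne' hab.2) ih
      _ ≤ _ := Finset.single_le_sum (fun b _ => mul_nonneg (hP _ b) (reachProb_nonneg hP b))
          (Finset.mem_univ _)

theorem reachProb_ne_zero_iff (hP : ∀ a b, 0 ≤ P a b) (hrow : ∀ a, ∑ b, P a b = 1) (s : S) :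
    reachProb P T s ≠ 0 ↔ ∃ t ∈ T, ReflTransGen (transEdge P T) s t := by
  refine ⟨fun h => ?_, fun ⟨t, ht, hst⟩ => (reachProb_pos_of_reflTransGen hP hrow hst ht).ne'⟩
  obtain ⟨π, hπ⟩ : ∃ π : {π : MCPath S // IsHitting T s π}, pathMass P π.1 ≠ 0 := by
    by_contra! h0
    exact h (by rw [reachProb, tsum_congr h0, tsum_zero])
  exact π.2.exists_reflTransGen hπ

theorem reachProb_eq_one_iff (hP : ∀ a b, 0 ≤ P a b) (hrow : ∀ a, ∑ b, P a b = 1) (s : S) :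
    reachProb P T s = 1 ↔
      ∀ u, ReflTransGen (transEdge P T) s u → ∃ t ∈ T, ReflTransGen (transEdge P T) u t := by
  constructor
  · intro hs u hsu
    refine (reachProb_ne_zero_iff hP hrow u).1 ?_
    suffices reachProb P T u = 1 by simp [this]
    induction hsu with
    | refl => exact hs
    | tail _ hab ih =>
      exact eq_of_forall_le_of_sum_mul_eq (hP _) (hrow _) (fun b _ => reachProb_le_one hP hrow b)
        ((reachProb_of_not_mem hP hrow hab.1).symm.trans ih) hab.2
  · intro h
    classical
    set R := Finset.univ.filter (ReflTransGen (transEdge P T) s)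
    obtain ⟨u, hu, hmin⟩ := R.exists_min_image (reachProb P T) ⟨s, by simpa [R] using .refl⟩
    simp only [R, Finset.mem_filter, Finset.mem_univ, true_and] at hu hmin
    -- the minimum of `reachProb` over the states reachable from `s` propagates forward
    have hprop : ∀ v, ReflTransGen (transEdge P T) u v →
        ReflTransGen (transEdge P T) s v ∧ reachProb P T v = reachProb P T u := by
      intro v huv
      induction huv with
      | refl => exact ⟨hu, rfl⟩
      | tail _ hab ih =>
        refine ⟨ih.1.tail hab, eq_of_forall_ge_of_sum_mul_eq (hP _) (hrow _)
          (fun b hb => hmin b (ih.1.tail ⟨hab.1, hb⟩)) ?_ hab.2⟩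
        rw [← reachProb_of_not_mem hP hrow hab.1, ih.2]
    obtain ⟨t, ht, hut⟩ := h u hu
    have hu1 : reachProb P T u = 1 := (hprop t hut).2.symm.trans (reachProb_of_mem ht)
    exact le_antisymm (reachProb_le_one hP hrow s) (hu1 ▸ hmin s .refl)

end Graph

section Instantiation

variable {X : Type} {p : MvPolynomial X ℚ} {val val' : X → ℝ}

lemma SimpleEntry.aeval_nonneg (hp : SimpleEntry p) (hval : WDVal val) :
    0 ≤ MvPolynomial.aeval val p := by
  rcases hp with ⟨q, hq, rfl⟩ | ⟨x, rfl⟩ | ⟨x, rfl⟩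
  · simpa [MvPolynomial.aeval_C] using hq
  · simpa using (hval x).1
  · simpa using (hval x).2

lemma SimpleEntry.aeval_eq_zero_iff (hp : SimpleEntry p)
    (hcons : ∀ x, (val x = 0 ↔ val' x = 0) ∧ (val x = 1 ↔ val' x = 1)) :
    MvPolynomial.aeval val p = 0 ↔ MvPolynomial.aeval val' p = 0 := by
  rcases hp with ⟨q, -, rfl⟩ | ⟨x, rfl⟩ | ⟨x, rfl⟩
  · simp
  · simpa using (hcons x).1
  · simpa [sub_eq_zero, eq_comm (a := (1 : ℝ))] using (hcons x).2

variable {n : ℕ}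

lemma instP_row_sum (D : SimplePMC X n) (val : X → ℝ) (s : Fin n) :
    ∑ s', instP D val s s' = 1 := by
  simp only [instP, ← map_sum, D.rowSum s, map_one]

end Instantiation

theorem qualitative_reach_graph_consistent_general {X : Type} {n : ℕ}
    (D : SimplePMC X n) (T : Set (Fin n)) (val val' : X → ℝ)
    (hval : WDVal val) (hval' : WDVal val')
    (hcons : ∀ x, (val x = 0 ↔ val' x = 0) ∧ (val x = 1 ↔ val' x = 1)) :
    ∀ s : Fin n,
      (reachProb (instP D val) T s = 0 ↔ reachProb (instP D val') T s = 0) ∧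
      (reachProb (instP D val) T s = 1 ↔ reachProb (instP D val') T s = 1) := by
  intro s
  have hP : ∀ a b, 0 ≤ instP D val a b := fun a b => (D.simple a b).aeval_nonneg hval
  have hP' : ∀ a b, 0 ≤ instP D val' a b := fun a b => (D.simple a b).aeval_nonneg hval'
  have hgraph : transEdge (instP D val) T = transEdge (instP D val') T :=
    transEdge_congr fun a b => (D.simple a b).aeval_eq_zero_iff hcons
  have hrow := instP_row_sum D val
  have hrow' := instP_row_sum D val'
  constructor
  · rw [← not_iff_not, ← ne_eq, ← ne_eq, reachProb_ne_zero_iff hP hrow,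
      reachProb_ne_zero_iff hP' hrow', hgraph]
  · rw [reachProb_eq_one_iff hP hrow, reachProb_eq_one_iff hP' hrow', hgraph]

/-- Proposition 3 of the paper, specialized to simple pMCs: two well-defined valuations with
the same zero/one pattern on the parameters induce chains agreeing on qualitative
reachability: from every state, the reachability probability is `0` (resp. `1`) under one
valuation iff it is under the other. -/
theorem qualitative_reach_graph_consistent {X : Type} [Fintype X] {n : ℕ}
    (D : SimplePMC X n) (T : Set (Fin n)) (val val' : X → ℝ)
    (hval : WDVal val) (hval' : WDVal val')
    (hcons : ∀ x, (val x = 0 ↔ val' x = 0) ∧ (val x = 1 ↔ val' x = 1)) :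
    ∀ s : Fin n,
      (reachProb (instP D val) T s = 0 ↔ reachProb (instP D val') T s = 0) ∧
      (reachProb (instP D val) T s = 1 ↔ reachProb (instP D val') T s = 1) :=
  qualitative_reach_graph_consistent_general D T val val' hval hval' hcons
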